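/- In a K-armed bandit with full pairwise coverage, the asymptotic stationary-point conditions of the Iterative Data Smoothing update—namely ŷ(a,a') = σ(r̂(a)−r̂(a')) together with (μ(a≻a')·ŷ + μ(a≺a')·(1−ŷ))·(1−σ(r̂(a)−r̂(a'))) = (μ(a≺a')·ŷ + μ(a≻a')·(1−ŷ))·σ(r̂(a)−r̂(a')) for every pair—force r̂(a) = r̂(a') for all a, a', and ŷ = 1/2. -/
import Mathlib


open Set

/-- The asymptotic stationary-point conditions of Iterative Data Smoothing with full
pairwise coverage force all estimated rewards equal and all soft labels to be `1/2`. -/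
theorem stmt_15 {K : ℕ} (rhat : Fin K → ℝ) (μ : Fin K → Fin K → ℝ)
    (yhat : Fin K → Fin K → ℝ)
    (hμ : ∀ a a' : Fin K, a ≠ a' → μ a a' ∈ Ioo (0 : ℝ) 1)
    (hμsymm : ∀ a a' : Fin K, a ≠ a' → μ a' a = 1 - μ a a')
    (hy : ∀ a a' : Fin K, a ≠ a' →
      yhat a a' = Real.exp (rhat a - rhat a')
        / (1 + Real.exp (rhat a - rhat a')))
    (hstat : ∀ a a' : Fin K, a ≠ a' →
      (μ a a' * yhat a a' + (1 - μ a a') * (1 - yhat a a'))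
          * (1 - Real.exp (rhat a - rhat a') / (1 + Real.exp (rhat a - rhat a')))
        = ((1 - μ a a') * yhat a a' + μ a a' * (1 - yhat a a'))
          * (Real.exp (rhat a - rhat a') / (1 + Real.exp (rhat a - rhat a')))) :
    (∀ a a' : Fin K, rhat a = rhat a') ∧
    (∀ a a' : Fin K, a ≠ a' → yhat a a' = 1 / 2) := by
  have key : ∀ a a' : Fin K, a ≠ a' → yhat a a' = 1 / 2 ∧ rhat a = rhat a' := by
    intro a a' h
    set E := Real.exp (rhat a - rhat a') with hE
    have hEpos : 0 < E := Real.exp_pos _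
    have hden : (0 : ℝ) < 1 + E := by linarith
    have hs : yhat a a' = E / (1 + E) := hy a a' h
    have hμ1 : μ a a' < 1 := (hμ a a' h).2
    have hstat' := hstat a a' h
    rw [hs, ← hE] at hstat'
    have hne : (1 + E) ≠ 0 := ne_of_gt hden
    field_simp at hstat'
    have h2 : (1 - μ a a') * (E ^ 2 - 1) = 0 := by linear_combination -hstat'
    have h3 : E ^ 2 = 1 := by
      rcases mul_eq_zero.mp h2 with h4 | h4
      · exact absurd h4 (by linarith)
      · linarith
    have hE1 : E = 1 := by nlinarith [sq_nonneg (E - 1)]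
    have hd : rhat a - rhat a' = 0 := by
      have : Real.exp (rhat a - rhat a') = Real.exp 0 := by
        rw [Real.exp_zero, ← hE, hE1]
      exact Real.exp_injective this
    constructor
    · rw [hs, hE1]; norm_num
    · linarith
  constructor
  · intro a a'
    by_cases h : a = a'
    · rw [h]
    · exact (key a a' h).2
  · intro a a' h
    exact (key a a' h).1
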